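/- Suppose additionally that 4γ + ‖W‖₁ < 1, where ‖W‖₁ = maxⱼ Σᵢ |w_ij|. Then the opinion-update map Ψ has a unique fixed point x* ∈ ℝⁿ, and for every initial vector x(0) ∈ ℝⁿ the iterates defined by x(k+1) = Ψ(x(k)) converge to x* as k → ∞. (Theorem 1, convergence part.) -/

import Mathlib

/-!
Writing `d(x, y) = ∑ᵢ |xᵢ - yᵢ|`, the map `Ψ` is a contraction for the `ℓ¹` distance, and Banach's
fixed point theorem gives the fixed point and the convergence of the iterates. The `γ`-terms of
`Ψ x i` combine to `γ (|xᵢ - h| (sᵢ - h) + |xᵢ - g| (sᵢ - g))`, which is `2γ`-Lipschitz in `xᵢ`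
because `|sᵢ - h|, |sᵢ - g| ≤ 1`, and the linear part `W x` has `ℓ¹` operator norm at most `‖W‖₁`.
-/

open Filter Topology Matrix

theorem exists_fixedPoint_tendsto_iterate_of_sum_abs_sub_le {ι : Type*} [Fintype ι]
    {Ψ : (ι → ℝ) → ι → ℝ} {K : ℝ} (hK0 : 0 ≤ K) (hK1 : K < 1)
    (hΨ : ∀ x y, ∑ i, |Ψ x i - Ψ y i| ≤ K * ∑ i, |x i - y i|) :
    ∃ xstar, Ψ xstar = xstar ∧ (∀ y, Ψ y = y → y = xstar) ∧
      ∀ x0, Tendsto (fun k => Ψ^[k] x0) atTop (𝓝 xstar) := by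
  let f : PiLp 1 (fun _ : ι => ℝ) → PiLp 1 (fun _ : ι => ℝ) :=
    WithLp.toLp 1 ∘ Ψ ∘ WithLp.ofLp
  have hf : ContractingWith ⟨K, hK0⟩ f := by
    refine ⟨hK1, LipschitzWith.of_dist_le_mul fun x y => ?_⟩
    simp only [PiLp.dist_eq_of_L1, Real.dist_eq]
    exact hΨ x.ofLp y.ofLp
  have hconj : Function.Semiconj WithLp.ofLp f Ψ := fun _ => rfl
  have : Nonempty (PiLp 1 (fun _ : ι => ℝ)) := ⟨0⟩
  refine ⟨(ContractingWith.fixedPoint f hf).ofLp,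
    congrArg WithLp.ofLp (hf.fixedPoint_isFixedPt (f := f)), fun y hy => ?_, fun x0 => ?_⟩
  · exact congrArg WithLp.ofLp (hf.fixedPoint_unique (x := WithLp.toLp 1 y) (congrArg _ hy))
  · have hlim := ((PiLp.continuous_ofLp 1 _).tendsto _).comp
      (hf.tendsto_iterate_fixedPoint (WithLp.toLp 1 x0))
    exact hlim.congr fun k => (hconj.iterate_right k (WithLp.toLp 1 x0))

theorem Matrix.sum_abs_mulVec_le {ι : Type*} [Fintype ι] (W : Matrix ι ι ℝ) {C : ℝ}
    (hC : ∀ j, ∑ i, |W i j| ≤ C) (z : ι → ℝ) :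
    ∑ i, |(W *ᵥ z) i| ≤ C * ∑ j, |z j| :=
  calc ∑ i, |(W *ᵥ z) i| ≤ ∑ i, ∑ j, |W i j| * |z j| :=
        Finset.sum_le_sum fun i _ =>
          (Finset.abs_sum_le_sum_abs _ _).trans_eq (by simp only [abs_mul])
    _ = ∑ j, (∑ i, |W i j|) * |z j| := by rw [Finset.sum_comm]; simp only [Finset.sum_mul]
    _ ≤ ∑ j, C * |z j| := Finset.sum_le_sum fun j _ => by gcongr; exact hC j
    _ = C * ∑ j, |z j| := (Finset.mul_sum _ _ _).symm

theorem abs_abs_sub_sub_abs_sub_mul_le {a b c t : ℝ} (ht : |t| ≤ 1) :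
    |(|a - c| - |b - c|) * t| ≤ |a - b| :=
  calc |(|a - c| - |b - c|) * t| ≤ |a - b| * 1 := by
        rw [abs_mul]
        refine mul_le_mul ?_ ht (abs_nonneg _) (abs_nonneg _)
        simpa only [sub_sub_sub_cancel_right] using abs_abs_sub_abs_le_abs_sub (a - c) (b - c)
    _ = |a - b| := mul_one _

theorem abs_sub_le_one_of_mem_Icc {a b : ℝ} (ha : a ∈ Set.Icc (0 : ℝ) 1)
    (hb : b ∈ Set.Icc (0 : ℝ) 1) : |a - b| ≤ 1 :=
  abs_le.mpr ⟨by linarith [ha.1, hb.2], by linarith [ha.2, hb.1]⟩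

section OpinionUpdate

variable {ι : Type*} [Fintype ι] (W : Matrix ι ι ℝ) (s : ι → ℝ) (g h β γ : ℝ)

def opinionUpdate (x : ι → ℝ) (i : ι) : ℝ :=
  (1 - (∑ j, W i j) - 2*β + γ*(|x i - h| + |x i - g|)) * s i
    + (∑ j, W i j * x j) + (β - γ*|x i - h|)*h + (β - γ*|x i - g|)*g

theorem opinionUpdate_sub_opinionUpdate (x y : ι → ℝ) (i : ι) :
    opinionUpdate W s g h β γ x i - opinionUpdate W s g h β γ y i = (W *ᵥ (x - y)) i
      + γ * ((|x i - h| - |y i - h|) * (s i - h) + (|x i - g| - |y i - g|) * (s i - g)) := by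
  simp only [opinionUpdate, Matrix.mulVec, dotProduct, Pi.sub_apply, mul_sub,
    Finset.sum_sub_distrib]
  ring

variable {s g h γ}

theorem abs_opinionUpdate_sub_le (hs : ∀ i, s i ∈ Set.Icc (0:ℝ) 1)
    (hg : g ∈ Set.Icc (0:ℝ) 1) (hh : h ∈ Set.Icc (0:ℝ) 1) (hγ0 : 0 ≤ γ) (x y : ι → ℝ) (i : ι) :
    |opinionUpdate W s g h β γ x i - opinionUpdate W s g h β γ y i|
      ≤ |(W *ᵥ (x - y)) i| + 2 * γ * |(x - y) i| := by
  have hsh := abs_abs_sub_sub_abs_sub_mul_le (a := x i) (b := y i) (c := h)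
    (abs_sub_le_one_of_mem_Icc (hs i) hh)
  have hsg := abs_abs_sub_sub_abs_sub_mul_le (a := x i) (b := y i) (c := g)
    (abs_sub_le_one_of_mem_Icc (hs i) hg)
  rw [opinionUpdate_sub_opinionUpdate, Pi.sub_apply]
  refine (abs_add_le _ _).trans (add_le_add_right ?_ _)
  calc |γ * ((|x i - h| - |y i - h|) * (s i - h) + (|x i - g| - |y i - g|) * (s i - g))|
      ≤ γ * (|x i - y i| + |x i - y i|) := by
        rw [abs_mul, abs_of_nonneg hγ0]
        gcongr
        exact (abs_add_le _ _).trans (add_le_add hsh hsg)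
    _ = 2 * γ * |x i - y i| := by ring

theorem sum_abs_opinionUpdate_sub_le (hs : ∀ i, s i ∈ Set.Icc (0:ℝ) 1)
    (hg : g ∈ Set.Icc (0:ℝ) 1) (hh : h ∈ Set.Icc (0:ℝ) 1) (hγ0 : 0 ≤ γ) {C : ℝ}
    (hC : ∀ j, ∑ i, |W i j| ≤ C) (x y : ι → ℝ) :
    ∑ i, |opinionUpdate W s g h β γ x i - opinionUpdate W s g h β γ y i|
      ≤ (2 * γ + C) * ∑ i, |x i - y i| :=
  calc ∑ i, |opinionUpdate W s g h β γ x i - opinionUpdate W s g h β γ y i|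
      ≤ ∑ i, |(W *ᵥ (x - y)) i| + 2 * γ * ∑ i, |(x - y) i| := by
        rw [Finset.mul_sum, ← Finset.sum_add_distrib]
        exact Finset.sum_le_sum fun i _ => abs_opinionUpdate_sub_le W β hs hg hh hγ0 x y i
    _ ≤ C * ∑ i, |(x - y) i| + 2 * γ * ∑ i, |(x - y) i| := by
        gcongr; exact W.sum_abs_mulVec_le hC _
    _ = (2 * γ + C) * ∑ i, |x i - y i| := by simp only [Pi.sub_apply]; ring

end OpinionUpdate

theorem stmt_1_general
    (n : ℕ) (hn : 1 ≤ n)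
    (W : Matrix (Fin n) (Fin n) ℝ)
    (s : Fin n → ℝ) (hs : ∀ i, s i ∈ Set.Icc (0:ℝ) 1)
    (g h : ℝ) (hg : g ∈ Set.Icc (0:ℝ) 1) (hh : h ∈ Set.Icc (0:ℝ) 1)
    (β γ : ℝ) (hγ0 : 0 ≤ γ)
    (Ψ : (Fin n → ℝ) → (Fin n → ℝ))
    (hΨ : ∀ x : Fin n → ℝ, ∀ i,
      Ψ x i = (1 - (∑ j, W i j) - 2*β + γ*(|x i - h| + |x i - g|)) * s i
        + (∑ j, W i j * x j) + (β - γ*|x i - h|)*h + (β - γ*|x i - g|)*g)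
    (Wnorm : ℝ)
    (hWnorm : Wnorm = Finset.univ.sup' (Finset.univ_nonempty_iff.mpr (Fin.pos_iff_nonempty.mp hn)) (fun j => ∑ i, |W i j|))
    (hcontr : 4*γ + Wnorm < 1) :
    ∃ xstar : Fin n → ℝ, Ψ xstar = xstar ∧
      (∀ y : Fin n → ℝ, Ψ y = y → y = xstar) ∧
      (∀ x0 : Fin n → ℝ,
        Filter.Tendsto (fun k => Ψ^[k] x0) Filter.atTop (nhds xstar)) := by
  obtain rfl : Ψ = opinionUpdate W s g h β γ := funext fun x => funext (hΨ x)
  have hcol : ∀ j, ∑ i, |W i j| ≤ Wnorm := fun j =>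
    hWnorm ▸ Finset.le_sup' (fun j => ∑ i, |W i j|) (Finset.mem_univ j)
  have hWnorm0 : 0 ≤ Wnorm :=
    (Finset.sum_nonneg fun i _ => abs_nonneg _).trans (hcol ⟨0, hn⟩)
  exact exists_fixedPoint_tendsto_iterate_of_sum_abs_sub_le (by positivity) (by linarith)
    (sum_abs_opinionUpdate_sub_le W β hs hg hh hγ0 hcol)

theorem stmt_1
    (n : ℕ) (hn : 1 ≤ n)
    (W : Matrix (Fin n) (Fin n) ℝ) (hW : ∀ i j, 0 ≤ W i j)
    (s : Fin n → ℝ) (hs : ∀ i, s i ∈ Set.Icc (0:ℝ) 1)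
    (g h : ℝ) (hg : g ∈ Set.Icc (0:ℝ) 1) (hh : h ∈ Set.Icc (0:ℝ) 1)
    (β γ : ℝ) (hγ0 : 0 ≤ γ) (hγβ : γ ≤ β)
    (Ψ : (Fin n → ℝ) → (Fin n → ℝ))
    (hΨ : ∀ x : Fin n → ℝ, ∀ i,
      Ψ x i = (1 - (∑ j, W i j) - 2*β + γ*(|x i - h| + |x i - g|)) * s i
        + (∑ j, W i j * x j) + (β - γ*|x i - h|)*h + (β - γ*|x i - g|)*g)
    (Wnorm : ℝ)
    (hWnorm : Wnorm = Finset.univ.sup' (Finset.univ_nonempty_iff.mpr (Fin.pos_iff_nonempty.mp hn)) (fun j => ∑ i, |W i j|))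
    (hcontr : 4*γ + Wnorm < 1) :
    ∃ xstar : Fin n → ℝ, Ψ xstar = xstar ∧
      (∀ y : Fin n → ℝ, Ψ y = y → y = xstar) ∧
      (∀ x0 : Fin n → ℝ,
        Filter.Tendsto (fun k => Ψ^[k] x0) Filter.atTop (nhds xstar)) :=
  stmt_1_general n hn W s hs g h hg hh β γ hγ0 Ψ hΨ Wnorm hWnorm hcontr
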